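/- arXiv:2210.06834 — 4 statements merged into one kernel-verified Lean document; each statement's English description precedes it below -/
import Mathlib

section
/- For real numbers a, b with |a| < |b|, the integral ∫₀^∞ (cosh(aθ) - 1)/(θ sinh(bθ)) dθ converges (is finite). -/
open Real MeasureTheory Set

lemma aux_sinh_le_mul_exp {x : ℝ} (hx : 0 ≤ x) : Real.sinh x ≤ x * Real.exp x := by
  rw [Real.sinh_eq]
  have h1 : Real.exp (-x) = Real.exp x * Real.exp (-(2*x)) := by
    rw [← Real.exp_add]; ring_nf
  have h2 : -(2*x) + 1 ≤ Real.exp (-(2*x)) := Real.add_one_le_exp _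
  nlinarith [Real.exp_pos x, Real.exp_pos (-(2*x))]

theorem stmt0 (a b : ℝ) (hab : |a| < |b|) :
    IntegrableOn (fun θ : ℝ => (Real.cosh (a * θ) - 1) / (θ * Real.sinh (b * θ)))
      (Set.Ioi 0) := by
  set c := |a| with hc
  set d := |b| with hd
  have hc0 : 0 ≤ c := abs_nonneg a
  have hd0 : 0 < d := lt_of_le_of_lt hc0 hab
  have hb0 : b ≠ 0 := by
    intro h
    rw [hd, h, abs_zero] at hd0
    exact lt_irrefl 0 hd0
  have hcd : 0 < (d - c)/2 := by linarith
  have hg : IntegrableOn (fun θ : ℝ => c * Real.exp (-((d - c)/2) * θ)) (Ioi 0) :=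
    (exp_neg_integrableOn_Ioi 0 hcd).const_mul c
  apply Integrable.mono' hg
  · apply ContinuousOn.aestronglyMeasurable _ measurableSet_Ioi
    apply ContinuousOn.div
    · fun_prop
    · fun_prop
    · intro θ hθ
      have hθ0 : 0 < θ := hθ
      have hs : Real.sinh (b * θ) ≠ 0 := by
        rw [Real.sinh_ne_zero]
        exact mul_ne_zero hb0 hθ0.ne'
      exact mul_ne_zero hθ0.ne' hs
  · rw [ae_restrict_iff' measurableSet_Ioi]
    filter_upwards with θ hθ
    have hθ0 : 0 < θ := hθ
    set x := c * θ / 2 with hxdef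
    set y := d * θ / 2 with hydef
    have hx0 : 0 ≤ x := by positivity
    have hy0 : 0 < y := by positivity
    have hxy : x ≤ y := by
      have := le_of_lt hab
      rw [hxdef, hydef]; nlinarith
    have hnum : |Real.cosh (a*θ) - 1| = 2 * Real.sinh x ^ 2 := by
      have hca : Real.cosh (a*θ) = Real.cosh (2*x) := by
        rw [← Real.cosh_abs, abs_mul, abs_of_pos hθ0]
        congr 1
        rw [hxdef]; ring
      rw [hca, Real.cosh_two_mul, Real.cosh_sq, abs_of_nonneg (by nlinarith [sq_nonneg (Real.sinh x)])]
      ring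
    have hden : |θ * Real.sinh (b*θ)| = θ * (2 * Real.sinh y * Real.cosh y) := by
      rw [abs_mul, abs_of_pos hθ0, Real.abs_sinh, abs_mul, abs_of_pos hθ0]
      have : |b| * θ = 2 * y := by rw [hydef, hd]; ring
      rw [this, Real.sinh_two_mul]
    have hdpos : 0 < θ * (2 * Real.sinh y * Real.cosh y) := by
      have h1 : 0 < Real.sinh y := Real.sinh_pos_iff.mpr hy0
      have h2 : 0 < Real.cosh y := Real.cosh_pos y
      positivity
    have h1 : Real.sinh x ≤ Real.sinh y := Real.sinh_le_sinh.mpr hxy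
    have h2 : Real.sinh x ≤ x * Real.exp x := aux_sinh_le_mul_exp hx0
    have hsx : 0 ≤ Real.sinh x := Real.sinh_nonneg_iff.mpr hx0
    have hsy : 0 < Real.sinh y := Real.sinh_pos_iff.mpr hy0
    have hB : Real.exp x ≤ Real.exp (x - y) * (2 * Real.cosh y) := by
      rw [Real.cosh_eq, Real.exp_sub]
      have e1 := Real.exp_pos x
      have e2 := Real.exp_pos y
      have e3 := Real.exp_pos (-y)
      rw [div_mul_eq_mul_div, le_div_iff₀ e2]
      have : Real.exp (-y) * Real.exp y = 1 := by rw [← Real.exp_add]; simp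
      nlinarith
    have hexpeq : Real.exp (-((d-c)/2) * θ) = Real.exp (x - y) := by
      congr 1; rw [hxdef, hydef]; ring
    have hcθ : c * θ = 2 * x := by rw [hxdef]; ring
    have key : 2 * Real.sinh x ^ 2 ≤
        c * Real.exp (-((d-c)/2) * θ) * (θ * (2 * Real.sinh y * Real.cosh y)) := by
      have stepA : Real.sinh x ^ 2 ≤ (x * Real.exp x) * Real.sinh y := by
        calc Real.sinh x ^ 2 = Real.sinh x * Real.sinh x := sq (Real.sinh x) ▸ by ring
        _ ≤ (x * Real.exp x) * Real.sinh y :=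
          mul_le_mul h2 h1 hsx (by positivity)
      have stepB : x * Real.exp x * Real.sinh y ≤
          x * (Real.exp (x - y) * (2 * Real.cosh y)) * Real.sinh y := by
        have := mul_le_mul_of_nonneg_left hB hx0
        exact mul_le_mul_of_nonneg_right (by nlinarith) hsy.le
      have heq : c * Real.exp (-((d-c)/2) * θ) * (θ * (2 * Real.sinh y * Real.cosh y))
          = 2 * (x * (Real.exp (x - y) * (2 * Real.cosh y)) * Real.sinh y) := by
        rw [hexpeq]
        have : c * Real.exp (x - y) * (θ * (2 * Real.sinh y * Real.cosh y))
            = (c * θ) * Real.exp (x - y) * (2 * Real.sinh y * Real.cosh y) := by ring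
        rw [this, hcθ]; ring
      rw [heq]
      nlinarith
    have hnorm : ‖(Real.cosh (a * θ) - 1) / (θ * Real.sinh (b * θ))‖
        = (2 * Real.sinh x ^ 2) / (θ * (2 * Real.sinh y * Real.cosh y)) := by
      rw [Real.norm_eq_abs, abs_div, hnum, hden]
    rw [hnorm, div_le_iff₀ hdpos]
    exact key
end

section
/- For every real z with 0 < |z| < π, (2/π) ∫₀^∞ sinh²(zx/π)/sinh²(x) dx = 1/π - (z/π) cot(z). -/
/-!
Writing `q = e^{-2x}`, one has `1 / sinh² x = 4q / (1 - q)² = ∑_{n ≥ 1} 4n e^{-2nx}` for `x > 0`.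
Integrating term by term against `sinh²(ax)`, `|a| < 1`, each term contributes
`a² / (n² - a²)`, and the resulting series is summed by the partial fraction expansion
`π cot(πa) = 1/a + ∑_{n ≥ 1} 2a / (a² - n²)`. The theorem is the case `a = z / π`.
-/

open Real MeasureTheory Set

lemma integral_exp_neg_mul_Ioi_zero {b : ℝ} (hb : 0 < b) :
    ∫ x in Ioi (0 : ℝ), exp (-b * x) = 1 / b := by
  rw [integral_exp_mul_Ioi (neg_neg_of_pos hb), mul_zero, exp_zero]
  ring

lemma integrableOn_exp_neg_mul_Ioi_zero {b : ℝ} (hb : 0 < b) :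
    IntegrableOn (fun x => exp (-b * x)) (Ioi 0) :=
  integrableOn_exp_mul_Ioi (neg_neg_of_pos hb) 0

lemma exp_neg_mul_mul_sinh_sq (a b x : ℝ) :
    exp (-b * x) * sinh (a * x) ^ 2
      = (exp (-(b - 2 * a) * x) + exp (-(b + 2 * a) * x) - 2 * exp (-b * x)) / 4 := by
  have h₁ : exp (-(b - 2 * a) * x) = exp (a * x) ^ 2 * exp (-b * x) := by
    rw [sq, ← exp_add, ← exp_add]; ring_nf
  have h₂ : exp (-(b + 2 * a) * x) = exp (-(a * x)) ^ 2 * exp (-b * x) := by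
    rw [sq, ← exp_add, ← exp_add]; ring_nf
  have h₃ : exp (a * x) * exp (-(a * x)) = 1 := by rw [← exp_add, add_neg_cancel, exp_zero]
  rw [h₁, h₂, sinh_eq]
  linear_combination (-exp (-b * x) / 2) * h₃

lemma integrableOn_exp_neg_mul_mul_sinh_sq {a b : ℝ} (h : 2 * |a| < b) :
    IntegrableOn (fun x => exp (-b * x) * sinh (a * x) ^ 2) (Ioi 0) := by
  obtain ⟨h₁, h₂⟩ := abs_lt.mp (show |2 * a| < b by rwa [abs_mul, abs_two])
  simp_rw [exp_neg_mul_mul_sinh_sq]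
  exact (((integrableOn_exp_neg_mul_Ioi_zero (by linarith)).add
    (integrableOn_exp_neg_mul_Ioi_zero (by linarith))).sub
    ((integrableOn_exp_neg_mul_Ioi_zero (by linarith)).const_mul 2)).div_const 4

lemma integral_exp_neg_mul_mul_sinh_sq {a b : ℝ} (h : 2 * |a| < b) :
    ∫ x in Ioi (0 : ℝ), exp (-b * x) * sinh (a * x) ^ 2
      = 2 * a ^ 2 / (b * (b ^ 2 - 4 * a ^ 2)) := by
  obtain ⟨h₁, h₂⟩ := abs_lt.mp (show |2 * a| < b by rwa [abs_mul, abs_two])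
  have hb_sub : 0 < b - 2 * a := by linarith
  have hb_add : 0 < b + 2 * a := by linarith
  have hb : 0 < b := by linarith
  have i_sub := integrableOn_exp_neg_mul_Ioi_zero hb_sub
  have i_add := integrableOn_exp_neg_mul_Ioi_zero hb_add
  simp_rw [exp_neg_mul_mul_sinh_sq]
  rw [integral_div,
    integral_sub (i_sub.fun_add i_add) ((integrableOn_exp_neg_mul_Ioi_zero hb).const_mul 2),
    integral_add i_sub i_add, integral_const_mul, integral_exp_neg_mul_Ioi_zero hb_sub,
    integral_exp_neg_mul_Ioi_zero hb_add, integral_exp_neg_mul_Ioi_zero hb,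
    show b ^ 2 - 4 * a ^ 2 = (b - 2 * a) * (b + 2 * a) by ring]
  field_simp
  ring

lemma hasSum_inv_sinh_sq {x : ℝ} (hx : 0 < x) :
    HasSum (fun n : ℕ => 4 * (n + 1) * exp (-(2 * (n + 1)) * x)) (sinh x ^ 2)⁻¹ := by
  set q := exp (-(2 * x)) with hq_def
  have hq : ‖q‖ < 1 := by
    rw [norm_of_nonneg (exp_pos _).le, exp_lt_one_iff]; linarith
  have hgeom : HasSum (fun n : ℕ => ((n + 1 : ℕ) : ℝ) * q ^ (n + 1)) (q / (1 - q) ^ 2) := by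
    have := (hasSum_nat_add_iff' (f := fun n : ℕ => (n : ℝ) * q ^ n) 1).mpr
      (hasSum_coe_mul_geometric_of_norm_lt_one hq)
    rwa [Finset.sum_range_one, Nat.cast_zero, zero_mul, sub_zero] at this
  have hpow (n : ℕ) : q ^ (n + 1) = exp (-(2 * (n + 1)) * x) := by
    rw [← exp_nat_mul]; push_cast; ring_nf
  have hsinh : 4 * q / (1 - q) ^ 2 = (sinh x ^ 2)⁻¹ := by
    have hq₁ : 1 - q ≠ 0 := by
      rw [norm_of_nonneg (exp_pos _).le] at hq; linarith
    have hsinh₀ : sinh x ≠ 0 := sinh_ne_zero.mpr hx.ne'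
    have hq_sq : q = (exp x)⁻¹ ^ 2 := by rw [hq_def, ← exp_neg, ← exp_nat_mul]; ring_nf
    rw [div_eq_iff (pow_ne_zero 2 hq₁), eq_comm, inv_mul_eq_iff_eq_mul₀ (pow_ne_zero 2 hsinh₀),
      sinh_eq, exp_neg, hq_sq]
    field_simp
    ring
  rw [← hsinh, mul_div_assoc]
  refine (hgeom.mul_left 4).congr_fun fun n => ?_
  rw [← hpow]; push_cast; ring

lemma Real.hasSum_cot_sub_inv {x : ℝ} (hx : ∀ n : ℤ, (n : ℝ) ≠ x) :
    HasSum (fun n : ℕ => 1 / (x - (n + 1)) + 1 / (x + (n + 1))) (π * cot (π * x) - 1 / x) := by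
  have hxC : (x : ℂ) ∈ Complex.integerComplement := by
    rintro ⟨n, hn⟩
    exact hx n (mod_cast hn)
  rw [← Complex.hasSum_ofReal]
  have := (summable_cotTerm hxC).hasSum
  rw [← cot_series_rep' hxC] at this
  push_cast [Complex.ofReal_cot]
  exact this

lemma integral_sinh_mul_sq_div_sinh_sq {a : ℝ} (ha₀ : a ≠ 0) (ha : |a| < 1) :
    ∫ x in Ioi (0 : ℝ), sinh (a * x) ^ 2 / sinh x ^ 2 = 1 / 2 - π * a / 2 * cot (π * a) := by
  set F : ℕ → ℝ → ℝ := fun n x => 4 * (n + 1) * exp (-(2 * (n + 1)) * x) * sinh (a * x) ^ 2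
  obtain ⟨ha₁, ha₂⟩ := abs_lt.mp ha
  have hb (n : ℕ) : 2 * |a| < 2 * (n + 1) := by have := n.cast_nonneg (α := ℝ); linarith
  have hF_eq (n : ℕ) :
      F n = fun x => 4 * (n + 1) * (exp (-(2 * (n + 1)) * x) * sinh (a * x) ^ 2) :=
    funext fun x => mul_assoc _ _ _
  have hF_int (n : ℕ) : Integrable (F n) (volume.restrict (Ioi 0)) := by
    rw [hF_eq]
    exact (integrableOn_exp_neg_mul_mul_sinh_sq (hb n)).const_mul _
  have hF_integral (n : ℕ) :
      ∫ x in Ioi 0, F n x = -(a / 2) * (1 / (a - (n + 1)) + 1 / (a + (n + 1))) := by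
    have := n.cast_nonneg (α := ℝ)
    have h₁ : a - (n + 1) ≠ 0 := by linarith
    have h₂ : a + (n + 1) ≠ 0 := by linarith
    rw [hF_eq, integral_const_mul, integral_exp_neg_mul_mul_sinh_sq (hb n),
      show (2 * (n + 1 : ℝ)) ^ 2 - 4 * a ^ 2 = -4 * ((a - (n + 1)) * (a + (n + 1))) by ring]
    field_simp
    ring
  have ha_int (n : ℤ) : (n : ℝ) ≠ a := by
    rintro rfl
    exact ha₀ (mod_cast Int.abs_lt_one_iff.mp (mod_cast ha))
  have hsum : HasSum (fun n => ∫ x in Ioi 0, F n x) (-(a / 2) * (π * cot (π * a) - 1 / a)) := by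
    simp_rw [hF_integral]
    exact (Real.hasSum_cot_sub_inv ha_int).mul_left _
  have hF_norm : Summable fun n => ∫ x in Ioi 0, ‖F n x‖ := by
    refine hsum.summable.congr fun n => integral_congr_ae (ae_of_all _ fun x => ?_)
    exact (norm_of_nonneg (by positivity)).symm
  have hpointwise : ∫ x in Ioi (0 : ℝ), sinh (a * x) ^ 2 / sinh x ^ 2
      = ∫ x in Ioi 0, ∑' n, F n x :=
    setIntegral_congr_fun measurableSet_Ioi fun x hx =>
      (((hasSum_inv_sinh_sq hx).mul_right (sinh (a * x) ^ 2)).tsum_eq.trans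
        (inv_mul_eq_div _ _)).symm
  rw [hpointwise, (hasSum_integral_of_summable_integral_norm hF_int hF_norm).unique hsum]
  field_simp
  ring

theorem stmt2 (z : ℝ) (hz0 : 0 < |z|) (hz : |z| < π) :
    (2 / π) * ∫ x in Set.Ioi (0:ℝ), (Real.sinh (z * x / π)) ^ 2 / (Real.sinh x) ^ 2
      = 1 / π - (z / π) * (Real.cos z / Real.sin z) := by
  have ha₀ : z / π ≠ 0 := div_ne_zero (abs_pos.mp hz0) pi_ne_zero
  have ha : |z / π| < 1 := by rwa [abs_div, abs_of_pos pi_pos, div_lt_one pi_pos]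
  simp_rw [mul_div_right_comm z]
  rw [integral_sinh_mul_sq_div_sinh_sq ha₀ ha, mul_div_cancel₀ z pi_ne_zero, cot_eq_cos_div_sin]
  field_simp
end

section
/- For γ, β ∈ (0,π) with γ + β < π, one has c(2γ, β, β) = 2 b(γ, β), where b(γ,β) := ∫₀^∞ [cosh(πθ/2) cosh((γ-β)θ) - cosh((π/2 - γ - β)θ)] / [2 sinh((γ+β)θ) sinh(πθ/2)] dθ, and c(γ,β,α) := b(γ+β, α) + b(γ+α, β) + ∫₀^∞ cosh(πθ/2)[cosh((β+α)θ) - cosh((β-α)θ)] / [sinh((γ+β+α)θ) sinh(πθ/2)] dθ. -/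
/-! Writing `u = (γ + β) θ`, `v = (γ - β) θ`, `z = π θ / 2`, the integrand of the last integral in
`cFun (2γ) β β` equals `2 bIntegrand γ β θ - 2 bIntegrand (2γ + β) β θ` pointwise: after clearing
the denominator `sinh 2u sinh z = 2 sinh u cosh u sinh z` this is the sum-to-product formula
`cosh z + cosh (z - 2u) = 2 cosh u cosh (z - u)`. The identity then integrates term by term, because
the integrand of `bFun a b` is integrable on `(0, ∞)` for all `a, b > 0`: it is the average of two
functions `sinh ((π/2 - b) θ) sinh (a θ) / (sinh ((a + b) θ) sinh (π θ / 2))`, each dominated by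
`exp (-b θ) + C (1 + π θ) exp (-π θ / 2)`. -/

open Real MeasureTheory Set

noncomputable def bFun (γ β : ℝ) : ℝ :=
  ∫ θ in Set.Ioi (0:ℝ),
    (Real.cosh (π * θ / 2) * Real.cosh ((γ - β) * θ) - Real.cosh ((π / 2 - γ - β) * θ)) /
      (2 * Real.sinh ((γ + β) * θ) * Real.sinh (π * θ / 2))

noncomputable def cFun (γ β α : ℝ) : ℝ :=
  bFun (γ + β) α + bFun (γ + α) β +
    ∫ θ in Set.Ioi (0:ℝ),
      Real.cosh (π * θ / 2) * (Real.cosh ((β + α) * θ) - Real.cosh ((β - α) * θ)) /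
        (Real.sinh ((γ + β + α) * θ) * Real.sinh (π * θ / 2))

namespace Real

lemma sinh_le_mul_exp (x : ℝ) : sinh x ≤ x * exp x := by
  have h := mul_le_mul_of_nonneg_left (add_one_le_exp (-(2 * x))) (exp_pos x).le
  have e : exp x * exp (-(2 * x)) = exp (-x) := by rw [← exp_add]; ring_nf
  rw [sinh_eq]
  nlinarith

lemma mul_exp_le_mul_sinh (x : ℝ) : x * exp x ≤ (1 + 2 * x) * sinh x := by
  have h := mul_le_mul_of_nonneg_left (add_one_le_exp (2 * x)) (exp_pos (-x)).le
  have e : exp (-x) * exp (2 * x) = exp x := by rw [← exp_add]; ring_nf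
  rw [sinh_eq]
  nlinarith

lemma inv_sinh_le {x : ℝ} (hx : 0 < x) : (sinh x)⁻¹ ≤ (1 + 2 * x) * exp (-x) / x := by
  have hs : 0 < sinh x := sinh_pos_iff.mpr hx
  rw [exp_neg]
  field_simp
  linarith [mul_exp_le_mul_sinh x]

lemma sinh_mul_exp_le_sinh_add (x : ℝ) {y : ℝ} (hy : 0 ≤ y) : sinh x * exp y ≤ sinh (x + y) := by
  rw [sinh_add, ← cosh_add_sinh y]
  nlinarith [sinh_lt_cosh x, sinh_nonneg_iff.mpr hy]

lemma abs_sinh_sub_le {x y : ℝ} (hx : 0 ≤ x) (hy : 0 ≤ y) : |sinh (x - y)| ≤ sinh x + sinh y := by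
  rw [abs_sinh]
  rcases le_total y x with h | h
  · rw [abs_of_nonneg (sub_nonneg.mpr h)]
    linarith [sinh_le_sinh.mpr (show x - y ≤ x by linarith), sinh_nonneg_iff.mpr hy]
  · rw [abs_of_nonpos (sub_nonpos.mpr h)]
    linarith [sinh_le_sinh.mpr (show -(x - y) ≤ y by linarith), sinh_nonneg_iff.mpr hx]

lemma cosh_add_cosh_sub_two_mul (z u : ℝ) :
    cosh z + cosh (z - 2 * u) = 2 * cosh u * cosh (z - u) := by
  rw [show cosh z = cosh ((z - u) + u) by ring_nf, show z - 2 * u = (z - u) - u by ring,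
    cosh_add (z - u) u, cosh_sub (z - u) u]
  ring

lemma abs_sinh_sub_mul_sinh_div_le {x y p : ℝ} (hx : 0 ≤ x) (hy : 0 < y) (hp : 0 < p) :
    |sinh (p - y) * sinh x / (sinh (x + y) * sinh p)|
      ≤ exp (-y) + y * ((1 + 2 * p) * exp (-p) / p) := by
  have hsp : 0 < sinh p := sinh_pos_iff.mpr hp
  have hsx : 0 ≤ sinh x := sinh_nonneg_iff.mpr hx
  have hsxy : 0 < sinh (x + y) := sinh_pos_iff.mpr (by linarith)
  have hratio : sinh x / sinh (x + y) ≤ exp (-y) := by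
    rw [div_le_iff₀ hsxy, exp_neg, ← div_eq_inv_mul, le_div_iff₀ (exp_pos y)]
    exact sinh_mul_exp_le_sinh_add x hy.le
  have hsy : sinh y * exp (-y) ≤ y := by
    rw [exp_neg, ← div_eq_mul_inv, div_le_iff₀ (exp_pos y)]
    exact sinh_le_mul_exp y
  calc |sinh (p - y) * sinh x / (sinh (x + y) * sinh p)|
      = |sinh (p - y)| * (sinh x / sinh (x + y)) * (sinh p)⁻¹ := by
        rw [abs_div, abs_mul, abs_mul, abs_of_nonneg hsx, abs_of_pos hsxy, abs_of_pos hsp]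
        field_simp
    _ ≤ (sinh p + sinh y) * exp (-y) * (sinh p)⁻¹ := by
        gcongr
        exact abs_sinh_sub_le hp.le hy.le
    _ = exp (-y) + sinh y * exp (-y) * (sinh p)⁻¹ := by field_simp
    _ ≤ exp (-y) + y * ((1 + 2 * p) * exp (-p) / p) := by
        gcongr
        exact inv_sinh_le hp

end Real

lemma integrableOn_mul_exp_neg_mul {b : ℝ} (hb : 0 < b) :
    IntegrableOn (fun x : ℝ => x * exp (-b * x)) (Ioi 0) := by
  simpa using integrableOn_rpow_mul_exp_neg_mul_rpow (s := 1) (p := 1) (by norm_num) one_pos hb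

lemma integrableOn_sinh_sub_mul_sinh_div {p a b : ℝ} (hp : 0 < p) (ha : 0 < a) (hb : 0 < b) :
    IntegrableOn (fun θ => sinh ((p - b) * θ) * sinh (a * θ) / (sinh ((a + b) * θ) * sinh (p * θ)))
      (Ioi 0) := by
  have hmajorant : IntegrableOn
      (fun θ => exp (-b * θ) + b / p * (exp (-p * θ) + 2 * p * (θ * exp (-p * θ)))) (Ioi 0) :=
    (exp_neg_integrableOn_Ioi 0 hb).add
      (((exp_neg_integrableOn_Ioi 0 hp).add
        ((integrableOn_mul_exp_neg_mul hp).const_mul _)).const_mul _)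
  refine hmajorant.mono' (Measurable.aestronglyMeasurable (by fun_prop)) ?_
  filter_upwards [ae_restrict_mem measurableSet_Ioi] with θ (hθ : 0 < θ)
  have h := abs_sinh_sub_mul_sinh_div_le (mul_pos ha hθ).le (mul_pos hb hθ) (mul_pos hp hθ)
  rw [← sub_mul, ← add_mul] at h
  rw [norm_eq_abs]
  convert h using 2
  · ring_nf
  · field_simp

noncomputable def bIntegrand (γ β θ : ℝ) : ℝ :=
  (cosh (π * θ / 2) * cosh ((γ - β) * θ) - cosh ((π / 2 - γ - β) * θ)) /
    (2 * sinh ((γ + β) * θ) * sinh (π * θ / 2))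

lemma bFun_eq_integral_bIntegrand (γ β : ℝ) : bFun γ β = ∫ θ in Ioi 0, bIntegrand γ β θ := rfl

lemma bIntegrand_eq_average (a b θ : ℝ) :
    bIntegrand a b θ =
      (sinh ((π / 2 - b) * θ) * sinh (a * θ) / (sinh ((a + b) * θ) * sinh (π / 2 * θ)) +
        sinh ((π / 2 - a) * θ) * sinh (b * θ) / (sinh ((b + a) * θ) * sinh (π / 2 * θ))) / 2 := by
  have hnum : cosh (π * θ / 2) * cosh ((a - b) * θ) - cosh ((π / 2 - a - b) * θ)
      = sinh ((π / 2 - b) * θ) * sinh (a * θ) + sinh ((π / 2 - a) * θ) * sinh (b * θ) := by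
    simp only [sub_mul, cosh_sub, sinh_sub]
    rw [show π * θ / 2 = π / 2 * θ by ring]
    ring
  rw [bIntegrand, hnum, add_comm b a, show π * θ / 2 = π / 2 * θ by ring, ← add_div, div_div]
  ring

lemma integrableOn_bIntegrand {a b : ℝ} (ha : 0 < a) (hb : 0 < b) :
    IntegrableOn (bIntegrand a b) (Ioi 0) := by
  have hp : (0 : ℝ) < π / 2 := by positivity
  simp_rw [funext (bIntegrand_eq_average a b)]
  exact ((integrableOn_sinh_sub_mul_sinh_div hp ha hb).add
    (integrableOn_sinh_sub_mul_sinh_div hp hb ha)).div_const 2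

/-- Also true when `sinh u = 0` or `sinh z = 0`, every term being then `_ / 0 = 0`. -/
lemma cosh_mul_cosh_sub_sub_one_div_eq (u v z : ℝ) :
    cosh z * (cosh (u - v) - 1) / (sinh (2 * u) * sinh z)
      = 2 * ((cosh z * cosh v - cosh (z - u)) / (2 * sinh u * sinh z))
        - 2 * ((cosh z * cosh (u + v) - cosh (z - 2 * u)) / (2 * sinh (2 * u) * sinh z)) := by
  rw [sinh_two_mul]
  by_cases hu : sinh u = 0
  · simp [hu]
  by_cases hz : sinh z = 0
  · simp [hz]
  rw [cosh_sub u v, cosh_add u v]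
  field_simp
  linear_combination -cosh_add_cosh_sub_two_mul z u

lemma cFun_integrand_two_mul_eq (γ β θ : ℝ) :
    cosh (π * θ / 2) * (cosh ((β + β) * θ) - cosh ((β - β) * θ)) /
        (sinh ((2 * γ + β + β) * θ) * sinh (π * θ / 2))
      = 2 * bIntegrand γ β θ - 2 * bIntegrand (2 * γ + β) β θ := by
  have := cosh_mul_cosh_sub_sub_one_div_eq ((γ + β) * θ) ((γ - β) * θ) (π * θ / 2)
  rw [bIntegrand, bIntegrand, sub_self, zero_mul, cosh_zero]
  convert this using 3 <;> ring_nf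

theorem stmt5_general (γ β : ℝ) (hγ : γ ∈ Set.Ioo 0 π) (hβ : β ∈ Set.Ioo 0 π) :
    cFun (2 * γ) β β = 2 * bFun γ β := by
  have hb : IntegrableOn (bIntegrand γ β) (Ioi 0) := integrableOn_bIntegrand hγ.1 hβ.1
  have hb' : IntegrableOn (bIntegrand (2 * γ + β) β) (Ioi 0) :=
    integrableOn_bIntegrand (by linarith [hγ.1, hβ.1]) hβ.1
  rw [cFun, funext (cFun_integrand_two_mul_eq γ β),
    integral_sub (hb.const_mul 2) (hb'.const_mul 2), integral_const_mul, integral_const_mul,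
    bFun_eq_integral_bIntegrand, bFun_eq_integral_bIntegrand]
  ring

theorem stmt5 (γ β : ℝ) (hγ : γ ∈ Set.Ioo 0 π) (hβ : β ∈ Set.Ioo 0 π)
    (hsum : γ + β < π) :
    cFun (2 * γ) β β = 2 * bFun γ β :=
  stmt5_general γ β hγ hβ
end

section
/- For 0 ≤ λ < ρ ≤ σ, σ ∈ (0,2π), and θ > 0, ∫₀^λ ∫₀^ρ Φ_σ(θ, φ, φ₀) dφ₀ dφ = (2λ/θ) sinh(πθ) + (sinh(πθ)/(θ² sinh(σθ))) [cosh((σ - ρ - λ)θ) - cosh((σ - ρ + λ)θ)], where Φ_σ(θ,φ,φ₀) := cosh((π - |φ₀ - φ|)θ) + (sinh(πθ)/sinh(σθ)) cosh((φ + φ₀ - σ)θ) + (sinh((π-σ)θ)/sinh(σθ)) cosh((φ - φ₀)θ). -/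
open Real MeasureTheory

noncomputable def Phi (σ θ φ φ₀ : ℝ) : ℝ :=
  Real.cosh ((π - |φ₀ - φ|) * θ) +
    Real.sinh (π * θ) / Real.sinh (σ * θ) * Real.cosh ((φ + φ₀ - σ) * θ) +
    Real.sinh ((π - σ) * θ) / Real.sinh (σ * θ) * Real.cosh ((φ - φ₀) * θ)

/-!
Splitting the inner integral at `φ₀ = φ` removes the absolute value; then every term of `Phi` is
the hyperbolic cosine of an affine function of the integration variable, and both integrations are
elementary. The resulting combination of hyperbolic functions collapses to the stated one by the
product-to-sum formulas.
-/

theorem integral_cosh_mul_add {c : ℝ} (hc : c ≠ 0) (d a b : ℝ) :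
    ∫ x in a..b, cosh (c * x + d) = (sinh (c * b + d) - sinh (c * a + d)) / c := by
  rw [intervalIntegral.integral_comp_mul_add (fun x => cosh x) hc,
    intervalIntegral.integral_eq_sub_of_hasDerivAt (fun x _ => hasDerivAt_sinh x)
      (continuous_cosh.intervalIntegrable _ _), smul_eq_mul, inv_mul_eq_div]

theorem integral_sinh_mul_add {c : ℝ} (hc : c ≠ 0) (d a b : ℝ) :
    ∫ x in a..b, sinh (c * x + d) = (cosh (c * b + d) - cosh (c * a + d)) / c := by
  rw [intervalIntegral.integral_comp_mul_add (fun x => sinh x) hc,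
    intervalIntegral.integral_eq_sub_of_hasDerivAt (fun x _ => hasDerivAt_cosh x)
      (continuous_sinh.intervalIntegrable _ _), smul_eq_mul, inv_mul_eq_div]

theorem integral_cosh_sub_abs_sub_mul {θ : ℝ} (hθ : θ ≠ 0) (a : ℝ) {φ ρ : ℝ} (hφ : 0 ≤ φ)
    (hφρ : φ ≤ ρ) :
    ∫ x in (0:ℝ)..ρ, cosh ((a - |x - φ|) * θ)
      = (2 * sinh (a * θ) - sinh ((a - φ) * θ) - sinh ((a - ρ + φ) * θ)) / θ := by
  have hint : ∀ s t : ℝ, IntervalIntegrable (fun x => cosh ((a - |x - φ|) * θ)) volume s t :=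
    fun s t => Continuous.intervalIntegrable (by fun_prop) s t
  have hleft : ∫ x in (0:ℝ)..φ, cosh ((a - |x - φ|) * θ)
      = ∫ x in (0:ℝ)..φ, cosh (θ * x + (a - φ) * θ) := by
    refine intervalIntegral.integral_congr fun x hx => ?_
    rw [Set.uIcc_of_le hφ] at hx
    simp only [abs_of_nonpos (sub_nonpos.2 hx.2)]
    ring_nf
  have hright : ∫ x in φ..ρ, cosh ((a - |x - φ|) * θ)
      = ∫ x in φ..ρ, cosh (-θ * x + (a + φ) * θ) := by
    refine intervalIntegral.integral_congr fun x hx => ?_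
    rw [Set.uIcc_of_le hφρ] at hx
    simp only [abs_of_nonneg (sub_nonneg.2 hx.1)]
    ring_nf
  rw [← intervalIntegral.integral_add_adjacent_intervals (hint 0 φ) (hint φ ρ), hleft, hright,
    integral_cosh_mul_add hθ, integral_cosh_mul_add (neg_ne_zero.2 hθ)]
  field_simp
  ring_nf

theorem integral_Phi_inner {σ θ φ ρ : ℝ} (hθ : θ ≠ 0) (hφ : 0 ≤ φ) (hφρ : φ ≤ ρ) :
    ∫ φ₀ in (0:ℝ)..ρ, Phi σ θ φ φ₀
      = (2 * sinh (π * θ) - sinh ((π - φ) * θ) - sinh ((π - ρ + φ) * θ)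
        + sinh (π * θ) / sinh (σ * θ) * (sinh ((φ + ρ - σ) * θ) - sinh ((φ - σ) * θ))
        + sinh ((π - σ) * θ) / sinh (σ * θ) * (sinh (φ * θ) - sinh ((φ - ρ) * θ))) / θ := by
  have hPhi : ∀ φ₀, Phi σ θ φ φ₀ = cosh ((π - |φ₀ - φ|) * θ)
      + sinh (π * θ) / sinh (σ * θ) * cosh (θ * φ₀ + (φ - σ) * θ)
      + sinh ((π - σ) * θ) / sinh (σ * θ) * cosh (-θ * φ₀ + φ * θ) := fun φ₀ => by
    rw [Phi, show (φ + φ₀ - σ) * θ = θ * φ₀ + (φ - σ) * θ by ring,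
      show (φ - φ₀) * θ = -θ * φ₀ + φ * θ by ring]
  simp only [hPhi]
  rw [intervalIntegral.integral_add, intervalIntegral.integral_add,
    intervalIntegral.integral_const_mul, intervalIntegral.integral_const_mul,
    integral_cosh_sub_abs_sub_mul hθ π hφ hφρ, integral_cosh_mul_add hθ,
    integral_cosh_mul_add (neg_ne_zero.2 hθ)]
  · field_simp
    ring_nf
  all_goals exact Continuous.intervalIntegrable (by fun_prop) _ _

theorem integral_integral_Phi {σ θ ρ lam : ℝ} (hθ : θ ≠ 0) (hlam : 0 ≤ lam) (hlr : lam ≤ ρ) :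
    ∫ φ in (0:ℝ)..lam, ∫ φ₀ in (0:ℝ)..ρ, Phi σ θ φ φ₀
      = (2 * (lam * θ) * sinh (π * θ)
        + (cosh ((π - lam) * θ) - cosh (π * θ) - cosh ((π - ρ + lam) * θ) + cosh ((π - ρ) * θ)
          + sinh (π * θ) / sinh (σ * θ) * (cosh ((lam + ρ - σ) * θ) - cosh ((ρ - σ) * θ)
            - cosh ((lam - σ) * θ) + cosh (σ * θ))
          + sinh ((π - σ) * θ) / sinh (σ * θ) * (cosh (lam * θ) - 1
            - cosh ((lam - ρ) * θ) + cosh (ρ * θ)))) / θ ^ 2 := by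
  -- arguments written as `c * φ + d`, the shape `integral_sinh_mul_add` matches
  have hinner : ∀ φ ∈ Set.uIcc 0 lam, ∫ φ₀ in (0:ℝ)..ρ, Phi σ θ φ φ₀
      = (2 * sinh (π * θ) - sinh (-θ * φ + π * θ) - sinh (θ * φ + (π - ρ) * θ)
        + sinh (π * θ) / sinh (σ * θ) * (sinh (θ * φ + (ρ - σ) * θ) - sinh (θ * φ + -σ * θ))
        + sinh ((π - σ) * θ) / sinh (σ * θ) * (sinh (θ * φ + 0) - sinh (θ * φ + -ρ * θ))) / θ := by
    intro φ hφ
    rw [Set.uIcc_of_le hlam] at hφ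
    rw [integral_Phi_inner hθ hφ.1 (hφ.2.trans hlr)]
    ring_nf
  rw [intervalIntegral.integral_congr hinner, intervalIntegral.integral_div,
    intervalIntegral.integral_add, intervalIntegral.integral_add, intervalIntegral.integral_sub,
    intervalIntegral.integral_sub, intervalIntegral.integral_const,
    intervalIntegral.integral_const_mul, intervalIntegral.integral_const_mul,
    intervalIntegral.integral_sub, intervalIntegral.integral_sub]
  · simp only [integral_sinh_mul_add hθ, integral_sinh_mul_add (neg_ne_zero.2 hθ)]
    simp only [mul_zero, zero_add, neg_mul, cosh_neg, cosh_zero]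
    field_simp
    ring_nf
  all_goals exact Continuous.intervalIntegrable (by fun_prop) _ _

/-- Expanding every product by `sinh p * cosh q = (sinh (p + q) + sinh (p - q)) / 2`, all terms
cancel in pairs. -/
theorem cosh_wedge_identity (a b x y : ℝ) (hb : sinh b ≠ 0) :
    cosh (a - x) - cosh a - cosh (a - y + x) + cosh (a - y)
      + sinh a / sinh b * (cosh (x + y - b) - cosh (y - b) - cosh (x - b) + cosh b)
      + sinh (a - b) / sinh b * (cosh x - 1 - cosh (x - y) + cosh y)
      = sinh a / sinh b * (cosh (b - y - x) - cosh (b - y + x)) := by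
  field_simp
  simp only [cosh_eq, sinh_eq, exp_add, exp_sub, exp_neg]
  field_simp
  ring

theorem stmt14_general (σ ρ lam θ : ℝ) (hlam : 0 ≤ lam) (hlr : lam < ρ)
    (hσ : σ ∈ Set.Ioo 0 (2 * π)) (hθ : 0 < θ) :
    ∫ φ in (0:ℝ)..lam, ∫ φ₀ in (0:ℝ)..ρ, Phi σ θ φ φ₀
      = (2 * lam / θ) * Real.sinh (π * θ)
        + (Real.sinh (π * θ) / (θ ^ 2 * Real.sinh (σ * θ))) *
            (Real.cosh ((σ - ρ - lam) * θ) - Real.cosh ((σ - ρ + lam) * θ)) := by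
  have hS : sinh (σ * θ) ≠ 0 := sinh_ne_zero.2 (mul_pos hσ.1 hθ).ne'
  have hidentity := cosh_wedge_identity (π * θ) (σ * θ) (lam * θ) (ρ * θ) hS
  simp only [← sub_mul, ← add_mul] at hidentity
  rw [integral_integral_Phi hθ.ne' hlam hlr.le, hidentity]
  field_simp

theorem stmt14 (σ ρ lam θ : ℝ) (hlam : 0 ≤ lam) (hlr : lam < ρ) (hrs : ρ ≤ σ)
    (hσ : σ ∈ Set.Ioo 0 (2 * π)) (hθ : 0 < θ) :
    ∫ φ in (0:ℝ)..lam, ∫ φ₀ in (0:ℝ)..ρ, Phi σ θ φ φ₀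
      = (2 * lam / θ) * Real.sinh (π * θ)
        + (Real.sinh (π * θ) / (θ ^ 2 * Real.sinh (σ * θ))) *
            (Real.cosh ((σ - ρ - lam) * θ) - Real.cosh ((σ - ρ + lam) * θ)) :=
  stmt14_general σ ρ lam θ hlam hlr hσ hθ
end
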